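/- If Y₁ ~ NG(0,1,θ₁) and Y₂ ~ NG(0,1,θ₂) with θ₁ > θ₂ (both < 1), then the likelihood ratio f(y;0,1,θ₁)/f(y;0,1,θ₂) is a strictly increasing function of y; in particular its logarithm v(y) = log((1-θ₁)/(1-θ₂)) + 2log(1-θ₂Φ(y)) - 2log(1-θ₁Φ(y)) has derivative v'(y) = 2(θ₁-θ₂)φ(y)/[(1-θ₂Φ(y))(1-θ₁Φ(y))] > 0 for all y. -/

import Mathlib

open MeasureTheory Filter Topology

noncomputable def stdPdf (x : ℝ) : ℝ := (Real.sqrt (2 * Real.pi))⁻¹ * Real.exp (-(x ^ 2) / 2)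

noncomputable def stdCdf (x : ℝ) : ℝ := ∫ t in Set.Iic x, stdPdf t

/-!
Writing `F` for the base CDF and `f = F'` for its density, the log of the likelihood ratio is
`log ((1-θ₁)/(1-θ₂)) + 2 log (1 - θ₂ F) - 2 log (1 - θ₁ F)`; the density factor `f` cancels. Its
derivative is `2 (θ₁ - θ₂) f / ((1 - θ₂ F)(1 - θ₁ F))`, positive because `θ₁ > θ₂`, `f > 0` and
`0 ≤ F ≤ 1` with `θᵢ < 1` keeps both factors `1 - θᵢ F` positive. The ratio is the exponential of
this strictly increasing function.
-/

open Real

lemma stdPdf_eq_gaussianPDFReal : stdPdf = ProbabilityTheory.gaussianPDFReal 0 1 := by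
  ext x
  simp [stdPdf, ProbabilityTheory.gaussianPDFReal]

lemma stdPdf_pos (x : ℝ) : 0 < stdPdf x := by
  rw [stdPdf_eq_gaussianPDFReal]
  exact ProbabilityTheory.gaussianPDFReal_pos _ _ _ one_ne_zero

lemma continuous_stdPdf : Continuous stdPdf := by
  unfold stdPdf
  fun_prop

lemma integrable_stdPdf : Integrable stdPdf := by
  rw [stdPdf_eq_gaussianPDFReal]
  exact ProbabilityTheory.integrable_gaussianPDFReal _ _

lemma stdCdf_nonneg (x : ℝ) : 0 ≤ stdCdf x :=
  setIntegral_nonneg measurableSet_Iic fun t _ => (stdPdf_pos t).le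

lemma stdCdf_le_one (x : ℝ) : stdCdf x ≤ 1 := by
  have h : ∫ t, stdPdf t = 1 := by
    rw [stdPdf_eq_gaussianPDFReal]
    exact ProbabilityTheory.integral_gaussianPDFReal_eq_one _ one_ne_zero
  rw [← h]
  exact setIntegral_le_integral integrable_stdPdf (Eventually.of_forall fun t => (stdPdf_pos t).le)

lemma hasDerivAt_stdCdf (y : ℝ) : HasDerivAt stdCdf (stdPdf y) y := by
  have hsplit : (fun x => stdCdf 0 + ∫ t in (0 : ℝ)..x, stdPdf t) = stdCdf := by
    ext x
    rw [← intervalIntegral.integral_Iic_sub_Iic integrable_stdPdf.integrableOn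
      integrable_stdPdf.integrableOn]
    exact add_sub_cancel _ _
  rw [← hsplit]
  exact (intervalIntegral.integral_hasDerivAt_right (continuous_stdPdf.intervalIntegrable 0 y)
    continuous_stdPdf.aestronglyMeasurable.stronglyMeasurableAtFilter
    continuous_stdPdf.continuousAt).const_add _

lemma one_sub_mul_pos {θ c : ℝ} (hθ : θ < 1) (hc₀ : 0 ≤ c) (hc₁ : c ≤ 1) : 0 < 1 - θ * c := by
  rcases le_total θ 0 with h | h <;> nlinarith

section LikelihoodRatio

variable {F : ℝ → ℝ} {θ₁ θ₂ : ℝ}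

noncomputable def ngLogLikelihoodRatio (F : ℝ → ℝ) (θ₁ θ₂ y : ℝ) : ℝ :=
  log ((1 - θ₁) / (1 - θ₂)) + 2 * log (1 - θ₂ * F y) - 2 * log (1 - θ₁ * F y)

lemma hasDerivAt_ngLogLikelihoodRatio {p y : ℝ} (hF : HasDerivAt F p y)
    (h₁ : 0 < 1 - θ₁ * F y) (h₂ : 0 < 1 - θ₂ * F y) :
    HasDerivAt (ngLogLikelihoodRatio F θ₁ θ₂)
      (2 * (θ₁ - θ₂) * p / ((1 - θ₂ * F y) * (1 - θ₁ * F y))) y := by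
  have hlog (θ : ℝ) (hθ : 0 < 1 - θ * F y) :
      HasDerivAt (fun x => log (1 - θ * F x)) (-(θ * p) / (1 - θ * F y)) y :=
    ((hF.const_mul θ).const_sub 1).log hθ.ne'
  have hsum : HasDerivAt (ngLogLikelihoodRatio F θ₁ θ₂)
      (2 * (-(θ₂ * p) / (1 - θ₂ * F y)) - 2 * (-(θ₁ * p) / (1 - θ₁ * F y))) y :=
    (((hlog θ₂ h₂).const_mul 2).const_add (log ((1 - θ₁) / (1 - θ₂)))).sub
      ((hlog θ₁ h₁).const_mul 2)
  convert hsum using 1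
  field_simp
  ring

lemma ngLikelihoodRatio_eq_exp {p y : ℝ} (hp : p ≠ 0) (hθ₁ : θ₁ < 1) (hθ₂ : θ₂ < 1)
    (h₁ : 0 < 1 - θ₁ * F y) (h₂ : 0 < 1 - θ₂ * F y) :
    ((1 - θ₁) * p / (1 - θ₁ * F y) ^ 2) / ((1 - θ₂) * p / (1 - θ₂ * F y) ^ 2) =
      exp (ngLogLikelihoodRatio F θ₁ θ₂ y) := by
  have hθ₂' : 1 - θ₂ ≠ 0 := by linarith
  rw [ngLogLikelihoodRatio, exp_sub, exp_add, exp_log (div_pos (by linarith) (by linarith)),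
    ← log_rpow h₂, ← log_rpow h₁, exp_log (by positivity), exp_log (by positivity)]
  norm_cast
  field_simp

end LikelihoodRatio

/-- for θ₂ < θ₁ < 1, the NG(0,1,θ₁)/NG(0,1,θ₂) likelihood ratio is strictly
increasing; its logarithm `v` has derivative
`v'(y) = 2(θ₁-θ₂)φ(y)/[(1-θ₂Φ(y))(1-θ₁Φ(y))] > 0`. -/
theorem ng_likelihood_ratio_increasing (θ₁ θ₂ : ℝ) (h1 : θ₁ < 1) (h2 : θ₂ < 1)
    (h12 : θ₂ < θ₁) :
    StrictMono (fun y => ((1 - θ₁) * stdPdf y / (1 - θ₁ * stdCdf y) ^ 2)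
        / ((1 - θ₂) * stdPdf y / (1 - θ₂ * stdCdf y) ^ 2)) ∧
    ∀ y : ℝ,
      HasDerivAt (fun y => Real.log ((1 - θ₁) / (1 - θ₂))
          + 2 * Real.log (1 - θ₂ * stdCdf y) - 2 * Real.log (1 - θ₁ * stdCdf y))
        (2 * (θ₁ - θ₂) * stdPdf y / ((1 - θ₂ * stdCdf y) * (1 - θ₁ * stdCdf y))) y ∧
      0 < 2 * (θ₁ - θ₂) * stdPdf y / ((1 - θ₂ * stdCdf y) * (1 - θ₁ * stdCdf y)) := by
  have h₁ (y : ℝ) := one_sub_mul_pos h1 (stdCdf_nonneg y) (stdCdf_le_one y)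
  have h₂ (y : ℝ) := one_sub_mul_pos h2 (stdCdf_nonneg y) (stdCdf_le_one y)
  have hderiv (y : ℝ) := hasDerivAt_ngLogLikelihoodRatio (hasDerivAt_stdCdf y) (h₁ y) (h₂ y)
  have hpos (y : ℝ) :
      0 < 2 * (θ₁ - θ₂) * stdPdf y / ((1 - θ₂ * stdCdf y) * (1 - θ₁ * stdCdf y)) :=
    div_pos (mul_pos (by linarith) (stdPdf_pos y)) (mul_pos (h₂ y) (h₁ y))
  refine ⟨?_, fun y => ⟨hderiv y, hpos y⟩⟩
  simp only [ngLikelihoodRatio_eq_exp (stdPdf_pos _).ne' h1 h2 (h₁ _) (h₂ _)]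
  exact exp_strictMono.comp (strictMono_of_hasDerivAt_pos hderiv hpos)
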